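/- Let N(t,x) and β(t,x) be given smooth lapse and shift perturbations, and let γ₀, κ₀ be smooth symmetric 3×3-matrix fields on ℝ³ satisfying the Hamiltonian constraint div(Mγ₀) = 0 and the momentum constraint Mκ₀ = 0. Then any smooth solution (γ, κ) on ℝ³ × [0,∞) of the linearized ADM evolution equations γ̇ = −2κ + 2ε(β), κ̇ = Rγ − ∇∇N, with γ(0) = γ₀ and κ(0) = κ₀, satisfies div(Mγ) = 0 and Mκ = 0 on ℝ³ for all t ≥ 0. -/

import Mathlib

set_option maxHeartbeats 1600000


/-- Partial derivative `∂_i f(x)` of a scalar field on `ℝ³`. -/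
noncomputable def pd (i : Fin 3) (f : (Fin 3 → ℝ) → ℝ) (x : Fin 3 → ℝ) : ℝ :=
  fderiv ℝ f x (Pi.single i 1)

/-- The momentum-constraint operator `(M u)_i = ∂^j u_{ij} − ∂_i u_j{}^j` of a symmetric
matrix field `u` on `ℝ³`. -/
noncomputable def Mop (u : (Fin 3 → ℝ) → Fin 3 → Fin 3 → ℝ) (x : Fin 3 → ℝ) (i : Fin 3) : ℝ :=
  (∑ j, pd j (fun y => u y i j) x) - pd i (fun y => ∑ j, u y j j) x

/-- `div (M u) = ∂^i (M u)_i`. -/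
noncomputable def divM (u : (Fin 3 → ℝ) → Fin 3 → Fin 3 → ℝ) (x : Fin 3 → ℝ) : ℝ :=
  ∑ i, pd i (fun y => Mop u y i) x

/-- The linearized Ricci operator
`(R u)_{ij} = (ε(div u))_{ij} − ½ Δ u_{ij} − ½ ∂_i ∂_j (tr u)`. -/
noncomputable def Rop (u : (Fin 3 → ℝ) → Fin 3 → Fin 3 → ℝ) (x : Fin 3 → ℝ) (i j : Fin 3) : ℝ :=
  (pd i (fun y => ∑ k, pd k (fun y' => u y' j k) y) x
    + pd j (fun y => ∑ k, pd k (fun y' => u y' i k) y) x) / 2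
  - (∑ l, pd l (fun y => pd l (fun y' => u y' i j) y) x) / 2
  - pd i (fun y => pd j (fun y' => ∑ k, u y' k k) y) x / 2



open scoped Topology

variable {E : Type*} [NormedAddCommGroup E] [NormedSpace ℝ E]

/-- Directional derivative operator on scalar fields. -/
noncomputable def Dv (v : E) (f : E → ℝ) (q : E) : ℝ := fderiv ℝ f q v

lemma Dv_smooth {f : E → ℝ} (hf : ContDiff ℝ (⊤ : ℕ∞) f) (v : E) : ContDiff ℝ (⊤ : ℕ∞) (Dv v f) :=
  (hf.fderiv_right (le_refl _)).clm_apply contDiff_const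

lemma Dv_comm {f : E → ℝ} (hf : ContDiff ℝ (⊤ : ℕ∞) f) (v w : E) (q : E) :
    Dv v (Dv w f) q = Dv w (Dv v f) q := by
  have hd : ∀ y, HasFDerivAt f (fderiv ℝ f y) y := fun y =>
    (hf.differentiable (by simp) y).hasFDerivAt
  have hdf : DifferentiableAt ℝ (fderiv ℝ f) q :=
    ((hf.fderiv_right (m := (⊤ : ℕ∞)) (le_refl _)).differentiable (by simp)) q
  have hsym := second_derivative_symmetric hd hdf.hasFDerivAt
  have h1 : ∀ a b : E, fderiv ℝ (Dv a f) q b = fderiv ℝ (fderiv ℝ f) q b a := by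
    intro a b
    show fderiv ℝ (fun y => fderiv ℝ f y a) q b = _
    rw [fderiv_clm_apply hdf (differentiableAt_const a)]
    simp
  show fderiv ℝ (Dv w f) q v = fderiv ℝ (Dv v f) q w
  rw [h1, h1]
  exact hsym v w

lemma Dv_congr_on {f g : E → ℝ} {U : Set E} (hU : IsOpen U) (h : Set.EqOn f g U) (v : E) :
    Set.EqOn (Dv v f) (Dv v g) U := by
  intro q hq
  unfold Dv
  rw [Filter.EventuallyEq.fderiv_eq (Filter.eventuallyEq_of_mem (hU.mem_nhds hq) h)]

lemma Dv_add {f g : E → ℝ} {q : E} (hf : DifferentiableAt ℝ f q) (hg : DifferentiableAt ℝ g q)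
    (v : E) : Dv v (fun q => f q + g q) q = Dv v f q + Dv v g q := by
  unfold Dv; rw [fderiv_fun_add hf hg]; rfl

lemma Dv_sub {f g : E → ℝ} {q : E} (hf : DifferentiableAt ℝ f q) (hg : DifferentiableAt ℝ g q)
    (v : E) : Dv v (fun q => f q - g q) q = Dv v f q - Dv v g q := by
  unfold Dv; rw [fderiv_fun_sub hf hg]; rfl

lemma Dv_mul {f g : E → ℝ} {q : E} (hf : DifferentiableAt ℝ f q) (hg : DifferentiableAt ℝ g q)
    (v : E) : Dv v (fun q => f q * g q) q = Dv v f q * g q + f q * Dv v g q := by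
  unfold Dv; rw [fderiv_fun_mul hf hg]; simp [mul_comm]; ring

lemma Dv_const_mul {f : E → ℝ} {q : E} (hf : DifferentiableAt ℝ f q) (c : ℝ) (v : E) :
    Dv v (fun q => c * f q) q = c * Dv v f q := by
  unfold Dv; rw [fderiv_const_mul hf]; rfl

lemma Dv_sum {ι : Type*} {s : Finset ι} {f : ι → E → ℝ} {q : E}
    (hf : ∀ i ∈ s, DifferentiableAt ℝ (f i) q) (v : E) :
    Dv v (fun q => ∑ i ∈ s, f i q) q = ∑ i ∈ s, Dv v (f i) q := by
  unfold Dv; rw [fderiv_fun_sum hf]; simp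

lemma Dv_neg {f : E → ℝ} (v : E) (q : E) :
    Dv v (fun q => -f q) q = -Dv v f q := by
  unfold Dv; rw [fderiv_fun_neg]; simp

lemma Dv_const (c : ℝ) (v : E) (q : E) : Dv v (fun _ => c) q = 0 := by
  unfold Dv; rw [fderiv_fun_const]; simp

lemma Dv_pow {f : E → ℝ} {q : E} (hf : DifferentiableAt ℝ f q) (n : ℕ) (v : E) :
    Dv v (fun q => f q ^ n) q = (n : ℝ) * f q ^ (n - 1) * Dv v f q := by
  unfold Dv
  have h : HasFDerivAt (fun q => f q ^ n) ((↑n * f q ^ (n - 1)) • fderiv ℝ f q) q :=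
    (hasDerivAt_pow n (f q)).comp_hasFDerivAt q hf.hasFDerivAt
  rw [h.fderiv]
  simp

/-- Swap the two outermost directional derivatives. -/
lemma Dv_comm12 {f : E → ℝ} (hf : ContDiff ℝ (⊤ : ℕ∞) f) (a b c : E) (q : E) :
    Dv a (Dv b (Dv c f)) q = Dv b (Dv a (Dv c f)) q :=
  Dv_comm (Dv_smooth hf c) a b q

/-- Swap the two innermost directional derivatives (of three). -/
lemma Dv_comm23 {f : E → ℝ} (hf : ContDiff ℝ (⊤ : ℕ∞) f) (a b c : E) (q : E) :
    Dv a (Dv b (Dv c f)) q = Dv a (Dv c (Dv b f)) q := by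
  have : Dv b (Dv c f) = Dv c (Dv b f) := funext fun q => Dv_comm hf b c q
  rw [this]

abbrev Q3 := ℝ × (Fin 3 → ℝ)

noncomputable def dX (i : Fin 3) : (Q3 → ℝ) → Q3 → ℝ := Dv ((0:ℝ), Pi.single i 1)
noncomputable def dT : (Q3 → ℝ) → Q3 → ℝ := Dv ((1:ℝ), (0 : Fin 3 → ℝ))

lemma dX_smooth {f : Q3 → ℝ} (hf : ContDiff ℝ (⊤ : ℕ∞) f) (i : Fin 3) : ContDiff ℝ (⊤ : ℕ∞) (dX i f) :=
  Dv_smooth hf _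

lemma dT_smooth {f : Q3 → ℝ} (hf : ContDiff ℝ (⊤ : ℕ∞) f) : ContDiff ℝ (⊤ : ℕ∞) (dT f) :=
  Dv_smooth hf _

/-! ### Spacetime constraint operators -/

noncomputable def Sop (G : Fin 3 → Fin 3 → Q3 → ℝ) (i : Fin 3) : Q3 → ℝ :=
  fun q => ∑ k, dX k (G i k) q

noncomputable def trU (G : Fin 3 → Fin 3 → Q3 → ℝ) : Q3 → ℝ := fun q => ∑ j, G j j q

noncomputable def MU (G : Fin 3 → Fin 3 → Q3 → ℝ) (i : Fin 3) : Q3 → ℝ :=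
  fun q => Sop G i q - dX i (trU G) q

noncomputable def HUop (G : Fin 3 → Fin 3 → Q3 → ℝ) : Q3 → ℝ :=
  fun q => ∑ i, dX i (MU G i) q

noncomputable def RopUop (G : Fin 3 → Fin 3 → Q3 → ℝ) (i j : Fin 3) : Q3 → ℝ :=
  fun q => (1/2) * (dX i (Sop G j) q + dX j (Sop G i) q)
    - (1/2) * (∑ l, dX l (dX l (G i j)) q) - (1/2) * dX i (dX j (trU G)) q

attribute [fun_prop] dX_smooth dT_smooth

section smooth
variable {G : Fin 3 → Fin 3 → Q3 → ℝ}

@[fun_prop] lemma Sop_smooth (hG : ∀ i j, ContDiff ℝ (⊤ : ℕ∞) (G i j)) (i : Fin 3) : ContDiff ℝ (⊤ : ℕ∞) (Sop G i) :=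
  ContDiff.sum fun k _ => dX_smooth (hG i k) k

@[fun_prop] lemma trU_smooth (hG : ∀ i j, ContDiff ℝ (⊤ : ℕ∞) (G i j)) : ContDiff ℝ (⊤ : ℕ∞) (trU G) := ContDiff.sum fun j _ => hG j j

@[fun_prop] lemma MU_smooth (hG : ∀ i j, ContDiff ℝ (⊤ : ℕ∞) (G i j)) (i : Fin 3) : ContDiff ℝ (⊤ : ℕ∞) (MU G i) :=
  (Sop_smooth hG i).sub (dX_smooth (trU_smooth hG) i)

@[fun_prop] lemma HUop_smooth (hG : ∀ i j, ContDiff ℝ (⊤ : ℕ∞) (G i j)) : ContDiff ℝ (⊤ : ℕ∞) (HUop G) :=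
  ContDiff.sum fun i _ => dX_smooth (MU_smooth hG i) i

@[fun_prop] lemma RopUop_smooth (hG : ∀ i j, ContDiff ℝ (⊤ : ℕ∞) (G i j)) (i j : Fin 3) : ContDiff ℝ (⊤ : ℕ∞) (RopUop G i j) :=
  ((contDiff_const.mul ((dX_smooth (Sop_smooth hG j) i).add (dX_smooth (Sop_smooth hG i) j))).sub
    (contDiff_const.mul (ContDiff.sum fun l _ => dX_smooth (dX_smooth (hG i j) l) l))).sub
    (contDiff_const.mul (dX_smooth (dX_smooth (trU_smooth hG) j) i))

/-- `HUop` expressed via `Sop` and the trace. -/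
lemma HUop_eq (hG : ∀ i j, ContDiff ℝ (⊤ : ℕ∞) (G i j)) :
    HUop G = fun q => (∑ i, dX i (Sop G i) q) - ∑ i, dX i (dX i (trU G)) q := by
  funext q
  have h1 : ∀ i : Fin 3, dX i (MU G i) q = dX i (Sop G i) q - dX i (dX i (trU G)) q := fun i =>
    Dv_sub (((Sop_smooth hG i).differentiable (by simp)) q)
      (((dX_smooth (trU_smooth hG) i).differentiable (by simp)) q) _
  show ∑ i, dX i (MU G i) q = _
  rw [Finset.sum_congr rfl fun i _ => h1 i, Finset.sum_sub_distrib]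

/-- trace of `RopUop` is `HUop`. -/
lemma trace_RopUop (hG : ∀ i j, ContDiff ℝ (⊤ : ℕ∞) (G i j)) (q : Q3) : ∑ j, RopUop G j j q = HUop G q := by
  have h1 : ∀ j : Fin 3, RopUop G j j q = dX j (Sop G j) q
      - (1/2) * (∑ l, dX l (dX l (G j j)) q) - (1/2) * dX j (dX j (trU G)) q := by
    intro j
    show (1/2) * (dX j (Sop G j) q + dX j (Sop G j) q) - _ - _ = _
    ring
  have h2 : ∀ l : Fin 3, dX l (dX l (trU G)) q = ∑ j, dX l (dX l (G j j)) q := by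
    intro l
    have ha : dX l (trU G) = fun q => ∑ j, dX l (G j j) q :=
      funext fun q' => Dv_sum (fun j _ => ((hG j j).differentiable (by simp)) q') _
    rw [ha]
    exact Dv_sum (fun j _ => ((dX_smooth (hG j j) l).differentiable (by simp)) q) _
  rw [Finset.sum_congr rfl fun j _ => h1 j]
  rw [HUop_eq hG]
  have h3 : ∑ l : Fin 3, ∑ j : Fin 3, dX l (dX l (G j j)) q
      = ∑ j : Fin 3, ∑ l : Fin 3, dX l (dX l (G j j)) q := Finset.sum_comm
  have h4 : ∑ l : Fin 3, dX l (dX l (trU G)) q = ∑ j : Fin 3, ∑ l : Fin 3, dX l (dX l (G j j)) q := by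
    rw [Finset.sum_congr rfl fun l _ => h2 l]; exact h3
  simp only [Finset.sum_sub_distrib]
  rw [h4]
  have h5 : ∑ j : Fin 3, ((1:ℝ)/2) * (∑ l, dX l (dX l (G j j)) q)
      = (1/2) * ∑ j : Fin 3, ∑ l, dX l (dX l (G j j)) q := by rw [Finset.mul_sum]
  have h6 : ∑ j : Fin 3, ((1:ℝ)/2) * dX j (dX j (trU G)) q
      = (1/2) * ∑ j : Fin 3, dX j (dX j (trU G)) q := by rw [Finset.mul_sum]
  rw [h5, h6, Finset.sum_congr rfl fun l _ => h2 l, h3]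
  ring

end smooth

section diffprop
variable {f : Q3 → ℝ} {G : Fin 3 → Fin 3 → Q3 → ℝ}
@[fun_prop] lemma dX_differentiable (hf : ContDiff ℝ (⊤ : ℕ∞) f) (i : Fin 3) :
    Differentiable ℝ (dX i f) := (dX_smooth hf i).differentiable (by simp)
@[fun_prop] lemma dX_differentiableAt (hf : ContDiff ℝ (⊤ : ℕ∞) f) (i : Fin 3) (q : Q3) :
    DifferentiableAt ℝ (dX i f) q := dX_differentiable hf i q
@[fun_prop] lemma dT_differentiable (hf : ContDiff ℝ (⊤ : ℕ∞) f) :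
    Differentiable ℝ (dT f) := (dT_smooth hf).differentiable (by simp)
@[fun_prop] lemma dT_differentiableAt (hf : ContDiff ℝ (⊤ : ℕ∞) f) (q : Q3) :
    DifferentiableAt ℝ (dT f) q := dT_differentiable hf q
@[fun_prop] lemma contDiff_finsum {ι : Type*} [Fintype ι] {f : ι → Q3 → ℝ}
    (hf : ∀ j, ContDiff ℝ (⊤ : ℕ∞) (f j)) : ContDiff ℝ (⊤ : ℕ∞) (fun q => ∑ j, f j q) :=
  ContDiff.sum fun j _ => hf j
@[fun_prop] lemma Sop_differentiableAt (hG : ∀ i j, ContDiff ℝ (⊤ : ℕ∞) (G i j)) (i : Fin 3) (q : Q3) :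
    DifferentiableAt ℝ (Sop G i) q := ((Sop_smooth hG i).differentiable (by simp)) q
@[fun_prop] lemma trU_differentiableAt (hG : ∀ i j, ContDiff ℝ (⊤ : ℕ∞) (G i j)) (q : Q3) :
    DifferentiableAt ℝ (trU G) q := ((trU_smooth hG).differentiable (by simp)) q
@[fun_prop] lemma MU_differentiableAt (hG : ∀ i j, ContDiff ℝ (⊤ : ℕ∞) (G i j)) (i : Fin 3) (q : Q3) :
    DifferentiableAt ℝ (MU G i) q := ((MU_smooth hG i).differentiable (by simp)) q
@[fun_prop] lemma HUop_differentiableAt (hG : ∀ i j, ContDiff ℝ (⊤ : ℕ∞) (G i j)) (q : Q3) :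
    DifferentiableAt ℝ (HUop G) q := ((HUop_smooth hG).differentiable (by simp)) q
@[fun_prop] lemma RopUop_differentiableAt (hG : ∀ i j, ContDiff ℝ (⊤ : ℕ∞) (G i j)) (i j : Fin 3) (q : Q3) :
    DifferentiableAt ℝ (RopUop G i j) q := ((RopUop_smooth hG i j).differentiable (by simp)) q
end diffprop
section evol
variable {G K : Fin 3 → Fin 3 → Q3 → ℝ} {B : Fin 3 → Q3 → ℝ} {Nu : Q3 → ℝ}

/-- divergence of the linearized Ricci operator: `∑_j ∂_j (R u)_{ij} = ½ ∂_i (div M u)`. -/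
lemma div_RopUop (hG : ∀ i j, ContDiff ℝ (⊤ : ℕ∞) (G i j)) (i : Fin 3) (q : Q3) :
    ∑ j, dX j (RopUop G i j) q = (1/2) * dX i (HUop G) q := by
  have hSd : ∀ (k : Fin 3) (q : Q3), DifferentiableAt ℝ (Sop G k) q := fun k q =>
    ((Sop_smooth hG k).differentiable (by simp)) q
  have htr : ContDiff ℝ (⊤ : ℕ∞) (trU G) := trU_smooth hG
  -- expand `dX j (RopUop G i j)`
  have h1 : ∀ j : Fin 3, dX j (RopUop G i j) q
      = (1/2) * (dX j (dX i (Sop G j)) q + dX j (dX j (Sop G i)) q)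
        - (1/2) * dX j (fun q' => ∑ l, dX l (dX l (G i j)) q') q
        - (1/2) * dX j (dX i (dX j (trU G))) q := by
    intro j
    have a1 : dX j (RopUop G i j) q
        = dX j (fun q' => (1/2) * (dX i (Sop G j) q' + dX j (Sop G i) q')) q
          - dX j (fun q' => (1/2) * (∑ l, dX l (dX l (G i j)) q')) q
          - dX j (fun q' => (1/2) * dX i (dX j (trU G)) q') q := by
      have b1 : dX j (RopUop G i j) q
          = dX j (fun q' => (1/2) * (dX i (Sop G j) q' + dX j (Sop G i) q')
              - (1/2) * (∑ l, dX l (dX l (G i j)) q')) q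
            - dX j (fun q' => (1/2) * dX i (dX j (trU G)) q') q :=
        Dv_sub (by fun_prop) (by fun_prop) _
      have b2 : dX j (fun q' => (1/2) * (dX i (Sop G j) q' + dX j (Sop G i) q')
              - (1/2) * (∑ l, dX l (dX l (G i j)) q')) q
          = dX j (fun q' => (1/2) * (dX i (Sop G j) q' + dX j (Sop G i) q')) q
            - dX j (fun q' => (1/2) * (∑ l, dX l (dX l (G i j)) q')) q :=
        Dv_sub (by fun_prop) (by fun_prop) _
      rw [b1, b2]
    have a2 : dX j (fun q' => (1/2) * (dX i (Sop G j) q' + dX j (Sop G i) q')) q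
        = (1/2) * (dX j (dX i (Sop G j)) q + dX j (dX j (Sop G i)) q) := by
      have c1 : dX j (fun q' => (1/2) * (dX i (Sop G j) q' + dX j (Sop G i) q')) q
          = (1/2) * dX j (fun q' => dX i (Sop G j) q' + dX j (Sop G i) q') q :=
        Dv_const_mul (by fun_prop) _ _
      have c2 : dX j (fun q' => dX i (Sop G j) q' + dX j (Sop G i) q') q
          = dX j (dX i (Sop G j)) q + dX j (dX j (Sop G i)) q :=
        Dv_add (by fun_prop) (by fun_prop) _
      rw [c1, c2]
    have a3 : dX j (fun q' => (1/2) * (∑ l, dX l (dX l (G i j)) q')) q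
        = (1/2) * dX j (fun q' => ∑ l, dX l (dX l (G i j)) q') q :=
      Dv_const_mul (by fun_prop) _ _
    have a4 : dX j (fun q' => (1/2) * dX i (dX j (trU G)) q') q
        = (1/2) * dX j (dX i (dX j (trU G))) q :=
      Dv_const_mul (by fun_prop) _ _
    rw [a1, a2, a3, a4]
  -- term (a): `∑_j ∂_j ∂_i (div u)_j = ∂_i ∑_j ∂_j (div u)_j`
  have h2 : ∑ j : Fin 3, dX j (dX i (Sop G j)) q
      = dX i (fun q' => ∑ j, dX j (Sop G j) q') q := by
    have c1 : ∀ j : Fin 3, dX j (dX i (Sop G j)) q = dX i (dX j (Sop G j)) q := fun j =>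
      Dv_comm (Sop_smooth hG j) _ _ q
    have c2 : dX i (fun q' => ∑ j, dX j (Sop G j) q') q = ∑ j, dX i (dX j (Sop G j)) q :=
      Dv_sum (fun j _ => by fun_prop) _
    rw [c2]; exact Finset.sum_congr rfl fun j _ => c1 j
  -- term (b)+(c) cancel
  have h3 : ∀ j : Fin 3, dX j (fun q' => ∑ l, dX l (dX l (G i j)) q') q
      = ∑ l, dX l (dX l (dX j (G i j))) q := by
    intro j
    have c1 : dX j (fun q' => ∑ l, dX l (dX l (G i j)) q') q
        = ∑ l, dX j (dX l (dX l (G i j))) q := Dv_sum (fun l _ => by fun_prop) _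
    rw [c1]
    refine Finset.sum_congr rfl fun l _ => ?_
    have c2 : dX j (dX l (dX l (G i j))) q = dX l (dX j (dX l (G i j))) q :=
      Dv_comm12 (hG i j) _ _ _ q
    have c3 : dX l (dX j (dX l (G i j))) q = dX l (dX l (dX j (G i j))) q :=
      Dv_comm23 (hG i j) _ _ _ q
    rw [c2, c3]
  have h4 : ∀ j : Fin 3, dX j (dX j (Sop G i)) q
      = ∑ k, dX j (dX j (dX k (G i k))) q := by
    intro j
    have c1 : dX j (Sop G i) = fun q' => ∑ k, dX j (dX k (G i k)) q' :=
      funext fun q' => Dv_sum (fun k _ => by fun_prop) _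
    have c2 : dX j (dX j (Sop G i)) q = dX j (fun q' => ∑ k, dX j (dX k (G i k)) q') q := by
      rw [c1]
    rw [c2]
    exact Dv_sum (fun k _ => by fun_prop) _
  have h5 : ∑ j : Fin 3, dX j (fun q' => ∑ l, dX l (dX l (G i j)) q') q
      = ∑ j : Fin 3, dX j (dX j (Sop G i)) q := by
    rw [Finset.sum_congr rfl fun j _ => h3 j, Finset.sum_congr rfl fun j _ => h4 j]
    rw [Finset.sum_comm]
  -- term (d)
  have h6 : ∑ j : Fin 3, dX j (dX i (dX j (trU G))) q
      = dX i (fun q' => ∑ j, dX j (dX j (trU G)) q') q := by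
    have c1 : ∀ j : Fin 3, dX j (dX i (dX j (trU G))) q = dX i (dX j (dX j (trU G))) q := fun j =>
      Dv_comm12 htr _ _ _ q
    have c2 : dX i (fun q' => ∑ j, dX j (dX j (trU G)) q') q = ∑ j, dX i (dX j (dX j (trU G))) q :=
      Dv_sum (fun j _ => by fun_prop) _
    rw [c2]; exact Finset.sum_congr rfl fun j _ => c1 j
  -- assemble
  have h7 : dX i (HUop G) q
      = dX i (fun q' => ∑ j, dX j (Sop G j) q') q - dX i (fun q' => ∑ j, dX j (dX j (trU G)) q') q := by
    have c1 : HUop G = fun q' => (∑ j, dX j (Sop G j) q') - ∑ j, dX j (dX j (trU G)) q' :=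
      HUop_eq hG
    rw [c1]
    exact Dv_sub (by fun_prop) (by fun_prop) _
  rw [Finset.sum_congr rfl fun j _ => h1 j]
  simp only [Finset.sum_sub_distrib, ← Finset.mul_sum, Finset.sum_add_distrib]
  rw [h2, h5, h6, h7]
  ring
end evol
section evol2
variable {G K : Fin 3 → Fin 3 → Q3 → ℝ} {B : Fin 3 → Q3 → ℝ} {Nu : Q3 → ℝ}

/-- time derivative of the momentum-type operator `MU` of an evolving field:
pure linearity and commutation, valid everywhere. -/
lemma dT_MU (hG : ∀ i j, ContDiff ℝ (⊤ : ℕ∞) (G i j)) (i : Fin 3) :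
    dT (MU G i) = fun q => (∑ j, dX j (dT (G i j)) q)
      - dX i (fun q' => ∑ j, dT (G j j) q') q := by
  funext q
  have h1 : dT (MU G i) q = dT (Sop G i) q - dT (dX i (trU G)) q :=
    Dv_sub (by fun_prop) (by fun_prop) _
  have h2 : dT (Sop G i) q = ∑ j, dT (dX j (G i j)) q :=
    Dv_sum (fun j _ => by fun_prop) _
  have h3 : ∀ j : Fin 3, dT (dX j (G i j)) q = dX j (dT (G i j)) q := fun j =>
    Dv_comm (hG i j) _ _ q
  have h4 : dT (dX i (trU G)) q = dX i (dT (trU G)) q := Dv_comm (trU_smooth hG) _ _ q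
  have h5 : dT (trU G) = fun q' => ∑ j, dT (G j j) q' :=
    funext fun q' => Dv_sum (fun j _ => ((hG j j).differentiable (by simp)) q') _
  rw [h1, h2, Finset.sum_congr rfl fun j _ => h3 j, h4, h5]

/-- Evolution of the Hamiltonian constraint. -/
lemma evol_HU (hG : ∀ i j, ContDiff ℝ (⊤ : ℕ∞) (G i j)) (hK : ∀ i j, ContDiff ℝ (⊤ : ℕ∞) (K i j))
    (hB : ∀ i, ContDiff ℝ (⊤ : ℕ∞) (B i))
    (hev : ∀ i j (q : Q3), 0 ≤ q.1 →
      dT (G i j) q = -2 * K i j q + (dX i (B j) q + dX j (B i) q)) :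
    ∀ q : Q3, 0 < q.1 → dT (HUop G) q = -2 * ∑ i, dX i (MU K i) q := by
  have hUo : IsOpen {q : Q3 | 0 < q.1} := isOpen_lt continuous_const continuous_fst
  have hRHSsmooth : ∀ i j : Fin 3, ContDiff ℝ (⊤ : ℕ∞)
      (fun q => -2 * K i j q + (dX i (B j) q + dX j (B i) q)) := fun i j => by fun_prop
  have hEqG : ∀ i j, Set.EqOn (dT (G i j))
      (fun q => -2 * K i j q + (dX i (B j) q + dX j (B i) q)) {q : Q3 | 0 < q.1} :=
    fun i j q hq => hev i j q (le_of_lt hq)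
  -- `dT (MU G i)` agrees on the half space with an explicit expression
  have hEq2 : ∀ i, Set.EqOn (dT (MU G i))
      (fun q => -2 * MU K i q + ((∑ j, dX j (dX j (B i)) q)
        - dX i (fun q' => ∑ j, dX j (B j) q') q)) {q : Q3 | 0 < q.1} := by
    intro i q hq
    rw [dT_MU hG i]
    show (∑ j, dX j (dT (G i j)) q) - dX i (fun q' => ∑ j, dT (G j j) q') q = _
    have e1 : ∀ j : Fin 3, dX j (dT (G i j)) q
        = dX j (fun q => -2 * K i j q + (dX i (B j) q + dX j (B i) q)) q := fun j =>
      Dv_congr_on hUo (hEqG i j) _ hq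
    have e2 : dX i (fun q' => ∑ j, dT (G j j) q') q
        = dX i (fun q' => ∑ j, (-2 * K j j q' + (dX j (B j) q' + dX j (B j) q'))) q := by
      refine Dv_congr_on hUo ?_ _ hq
      intro q' hq'
      exact Finset.sum_congr rfl fun j _ => hEqG j j hq'
    rw [Finset.sum_congr rfl fun j _ => e1 j, e2]
    -- now a pointwise computation valid everywhere
    have e3 : ∀ j : Fin 3, dX j (fun q => -2 * K i j q + (dX i (B j) q + dX j (B i) q)) q
        = -2 * dX j (K i j) q + (dX j (dX i (B j)) q + dX j (dX j (B i)) q) := by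
      intro j
      have a1 : dX j (fun q => -2 * K i j q + (dX i (B j) q + dX j (B i) q)) q
          = dX j (fun q => -2 * K i j q) q + dX j (fun q => dX i (B j) q + dX j (B i) q) q :=
        Dv_add ((((hK i j).differentiable (by simp)) q).const_mul (-2))
          ((dX_differentiableAt (hB j) i q).add (dX_differentiableAt (hB i) j q)) _
      have a2 : dX j (fun q => -2 * K i j q) q = -2 * dX j (K i j) q :=
        Dv_const_mul (((hK i j).differentiable (by simp)) q) _ _
      have a3 : dX j (fun q => dX i (B j) q + dX j (B i) q) q
          = dX j (dX i (B j)) q + dX j (dX j (B i)) q := Dv_add (by fun_prop) (by fun_prop) _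
      rw [a1, a2, a3]
    have e4 : dX i (fun q' => ∑ j, (-2 * K j j q' + (dX j (B j) q' + dX j (B j) q'))) q
        = ∑ j, (-2 * dX i (K j j) q + (dX i (dX j (B j)) q + dX i (dX j (B j)) q)) := by
      have a1 : dX i (fun q' => ∑ j, (-2 * K j j q' + (dX j (B j) q' + dX j (B j) q'))) q
          = ∑ j, dX i (fun q' => -2 * K j j q' + (dX j (B j) q' + dX j (B j) q')) q :=
        Dv_sum (fun j _ => (((hK j j).differentiable (by simp) _).const_mul (-2)).add
          ((dX_differentiableAt (hB j) j _).add (dX_differentiableAt (hB j) j _))) _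
      rw [a1]
      refine Finset.sum_congr rfl fun j _ => ?_
      have a2 : dX i (fun q' => -2 * K j j q' + (dX j (B j) q' + dX j (B j) q')) q
          = dX i (fun q' => -2 * K j j q') q + dX i (fun q' => dX j (B j) q' + dX j (B j) q') q :=
        Dv_add ((((hK j j).differentiable (by simp)) q).const_mul (-2))
          ((dX_differentiableAt (hB j) j q).add (dX_differentiableAt (hB j) j q)) _
      have a3 : dX i (fun q' => -2 * K j j q') q = -2 * dX i (K j j) q :=
        Dv_const_mul (((hK j j).differentiable (by simp)) q) _ _
      have a4 : dX i (fun q' => dX j (B j) q' + dX j (B j) q') q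
          = dX i (dX j (B j)) q + dX i (dX j (B j)) q := Dv_add (by fun_prop) (by fun_prop) _
      rw [a2, a3, a4]
    rw [Finset.sum_congr rfl fun j _ => e3 j, e4]
    -- identify with the target expression
    have e5 : MU K i q = (∑ j, dX j (K i j) q) - ∑ j, dX i (K j j) q := by
      have a1 : MU K i q = Sop K i q - dX i (trU K) q := rfl
      have a2 : dX i (trU K) q = ∑ j, dX i (K j j) q :=
        Dv_sum (fun j _ => ((hK j j).differentiable (by simp)) q) _
      rw [a1, a2]; rfl
    have e6 : dX i (fun q' => ∑ j, dX j (B j) q') q = ∑ j, dX i (dX j (B j)) q :=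
      Dv_sum (fun j _ => by fun_prop) _
    have e7 : ∀ j : Fin 3, dX j (dX i (B j)) q = dX i (dX j (B j)) q := fun j =>
      Dv_comm (hB j) _ _ q
    rw [Finset.sum_congr rfl fun j _ =>
      congrArg (fun z => -2 * dX j (K i j) q + (z + dX j (dX j (B i)) q)) (e7 j)]
    simp only [e5, e6, Finset.sum_add_distrib, Finset.sum_sub_distrib, ← Finset.mul_sum]
    ring
  -- assemble the time derivative of `HUop G`
  intro q hq
  have h1 : dT (HUop G) q = ∑ i, dT (dX i (MU G i)) q := Dv_sum (fun i _ => by fun_prop) _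
  have h2 : ∀ i : Fin 3, dT (dX i (MU G i)) q = dX i (dT (MU G i)) q := fun i =>
    Dv_comm (MU_smooth hG i) _ _ q
  have h3 : ∀ i : Fin 3, dX i (dT (MU G i)) q
      = dX i (fun q => -2 * MU K i q + ((∑ j, dX j (dX j (B i)) q)
          - dX i (fun q' => ∑ j, dX j (B j) q') q)) q := fun i =>
    Dv_congr_on hUo (hEq2 i) _ hq
  have h4 : ∀ i : Fin 3, dX i (fun q => -2 * MU K i q + ((∑ j, dX j (dX j (B i)) q)
          - dX i (fun q' => ∑ j, dX j (B j) q') q)) q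
      = -2 * dX i (MU K i) q + ((∑ j, dX i (dX j (dX j (B i))) q)
          - dX i (dX i (fun q' => ∑ j, dX j (B j) q')) q) := by
    intro i
    have a1 : dX i (fun q => -2 * MU K i q + ((∑ j, dX j (dX j (B i)) q)
          - dX i (fun q' => ∑ j, dX j (B j) q') q)) q
        = dX i (fun q => -2 * MU K i q) q + dX i (fun q => (∑ j, dX j (dX j (B i)) q)
          - dX i (fun q' => ∑ j, dX j (B j) q') q) q := Dv_add (by fun_prop) (by fun_prop) _
    have a2 : dX i (fun q => -2 * MU K i q) q = -2 * dX i (MU K i) q :=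
      Dv_const_mul (((MU_smooth hK i).differentiable (by simp)) q) _ _
    have a3 : dX i (fun q => (∑ j, dX j (dX j (B i)) q)
          - dX i (fun q' => ∑ j, dX j (B j) q') q) q
        = dX i (fun q => ∑ j, dX j (dX j (B i)) q) q
          - dX i (dX i (fun q' => ∑ j, dX j (B j) q')) q := Dv_sub (by fun_prop) (by fun_prop) _
    have a4 : dX i (fun q => ∑ j, dX j (dX j (B i)) q) q = ∑ j, dX i (dX j (dX j (B i))) q :=
      Dv_sum (fun j _ => by fun_prop) _
    rw [a1, a2, a3, a4]
  have h5 : ∑ i : Fin 3, ((∑ j : Fin 3, dX i (dX j (dX j (B i))) q)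
      - dX i (dX i (fun q' => ∑ j, dX j (B j) q')) q) = 0 := by
    have a1 : ∀ i : Fin 3, dX i (dX i (fun q' => ∑ j, dX j (B j) q')) q
        = ∑ j, dX i (dX i (dX j (B j))) q := by
      intro i
      have b1 : dX i (fun q' => ∑ j, dX j (B j) q') = fun q' => ∑ j, dX i (dX j (B j)) q' :=
        funext fun q' => Dv_sum (fun j _ => by fun_prop) _
      rw [b1]
      exact Dv_sum (fun j _ => by fun_prop) _
    have a2 : ∀ i j : Fin 3, dX j (dX i (dX i (B j))) q = dX i (dX i (dX j (B j))) q := by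
      intro i j
      have b1 : dX j (dX i (dX i (B j))) q = dX i (dX j (dX i (B j))) q :=
        Dv_comm12 (hB j) _ _ _ q
      have b2 : dX i (dX j (dX i (B j))) q = dX i (dX i (dX j (B j))) q :=
        Dv_comm23 (hB j) _ _ _ q
      rw [b1, b2]
    have a3 : ∑ i : Fin 3, ∑ j : Fin 3, dX i (dX j (dX j (B i))) q
        = ∑ i : Fin 3, ∑ j : Fin 3, dX i (dX i (dX j (B j))) q := by
      rw [Finset.sum_comm]
      exact Finset.sum_congr rfl fun i _ => Finset.sum_congr rfl fun j _ => a2 i j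
    simp only [Finset.sum_sub_distrib, Finset.sum_congr rfl fun i _ => a1 i]
    rw [a3]
    simp
  rw [h1, Finset.sum_congr rfl fun i _ => h2 i, Finset.sum_congr rfl fun i _ => h3 i,
    Finset.sum_congr rfl fun i _ => h4 i]
  simp only [Finset.sum_add_distrib, ← Finset.mul_sum]
  rw [h5]
  ring

/-- Evolution of the momentum constraint. -/
lemma evol_PU (hG : ∀ i j, ContDiff ℝ (⊤ : ℕ∞) (G i j)) (hK : ∀ i j, ContDiff ℝ (⊤ : ℕ∞) (K i j))
    (hN : ContDiff ℝ (⊤ : ℕ∞) Nu)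
    (hev : ∀ i j (q : Q3), 0 ≤ q.1 →
      dT (K i j) q = RopUop G i j q - dX i (dX j Nu) q) :
    ∀ (i : Fin 3) (q : Q3), 0 < q.1 → dT (MU K i) q = -(1/2) * dX i (HUop G) q := by
  have hUo : IsOpen {q : Q3 | 0 < q.1} := isOpen_lt continuous_const continuous_fst
  have hEqK : ∀ i j, Set.EqOn (dT (K i j))
      (fun q => RopUop G i j q - dX i (dX j Nu) q) {q : Q3 | 0 < q.1} :=
    fun i j q hq => hev i j q (le_of_lt hq)
  intro i q hq
  rw [dT_MU hK i]
  show (∑ j, dX j (dT (K i j)) q) - dX i (fun q' => ∑ j, dT (K j j) q') q = _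
  have e1 : ∀ j : Fin 3, dX j (dT (K i j)) q
      = dX j (fun q => RopUop G i j q - dX i (dX j Nu) q) q := fun j =>
    Dv_congr_on hUo (hEqK i j) _ hq
  have e2 : dX i (fun q' => ∑ j, dT (K j j) q') q
      = dX i (fun q' => ∑ j, (RopUop G j j q' - dX j (dX j Nu) q')) q := by
    refine Dv_congr_on hUo ?_ _ hq
    intro q' hq'
    exact Finset.sum_congr rfl fun j _ => hEqK j j hq'
  rw [Finset.sum_congr rfl fun j _ => e1 j, e2]
  have e3 : ∀ j : Fin 3, dX j (fun q => RopUop G i j q - dX i (dX j Nu) q) q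
      = dX j (RopUop G i j) q - dX j (dX i (dX j Nu)) q := fun j =>
    Dv_sub (by fun_prop) (by fun_prop) _
  have e4 : dX i (fun q' => ∑ j, (RopUop G j j q' - dX j (dX j Nu) q')) q
      = dX i (HUop G) q - ∑ j, dX i (dX j (dX j Nu)) q := by
    have a0 : (fun q' => ∑ j, (RopUop G j j q' - dX j (dX j Nu) q'))
        = fun q' => HUop G q' - ∑ j, dX j (dX j Nu) q' := by
      funext q'
      rw [Finset.sum_sub_distrib, trace_RopUop hG q']
    rw [a0]
    have a1 : dX i (fun q' => HUop G q' - ∑ j, dX j (dX j Nu) q') q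
        = dX i (HUop G) q - dX i (fun q' => ∑ j, dX j (dX j Nu) q') q :=
      Dv_sub (by fun_prop) (by fun_prop) _
    have a2 : dX i (fun q' => ∑ j, dX j (dX j Nu) q') q = ∑ j, dX i (dX j (dX j Nu)) q :=
      Dv_sum (fun j _ => by fun_prop) _
    rw [a1, a2]
  rw [Finset.sum_congr rfl fun j _ => e3 j, e4]
  have e5 : ∀ j : Fin 3, dX j (dX i (dX j Nu)) q = dX i (dX j (dX j Nu)) q := fun j =>
    Dv_comm12 hN _ _ _ q
  rw [Finset.sum_sub_distrib, Finset.sum_congr rfl fun j _ => e5 j,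
    div_RopUop hG i q]
  ring
end evol2
/-! ### Translation between spatial `pd` and spacetime `dX`/`dT` -/

lemma pd_eq_dX {f : Q3 → ℝ} {t : ℝ} {x : Fin 3 → ℝ} (hf : DifferentiableAt ℝ f (t, x))
    (i : Fin 3) : pd i (fun y => f (t, y)) x = dX i f (t, x) := by
  have h1 : HasFDerivAt (fun y : Fin 3 → ℝ => (t, y)) (ContinuousLinearMap.inr ℝ ℝ (Fin 3 → ℝ)) x :=
    (hasFDerivAt_const t x).prodMk (hasFDerivAt_id x)
  have h2 : HasFDerivAt (fun y => f (t, y))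
      ((fderiv ℝ f (t, x)).comp (ContinuousLinearMap.inr ℝ ℝ (Fin 3 → ℝ))) x :=
    hf.hasFDerivAt.comp x h1
  unfold pd dX Dv
  rw [h2.fderiv]
  rfl

lemma deriv_eq_dT {f : Q3 → ℝ} {t : ℝ} {x : Fin 3 → ℝ} (hf : DifferentiableAt ℝ f (t, x)) :
    deriv (fun s => f (s, x)) t = dT f (t, x) := by
  have h1 : HasFDerivAt (fun s : ℝ => (s, x))
      ((ContinuousLinearMap.id ℝ ℝ).prod 0) t :=
    (hasFDerivAt_id t).prodMk (hasFDerivAt_const x t)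
  have h2 : HasFDerivAt (fun s => f (s, x))
      ((fderiv ℝ f (t, x)).comp ((ContinuousLinearMap.id ℝ ℝ).prod 0)) t :=
    hf.hasFDerivAt.comp t h1
  have h3 := h2.hasDerivAt
  rw [h3.deriv]
  unfold dT Dv
  rfl

/-- uncurried spacetime versions of the data fields -/
def toQ (γ : ℝ → (Fin 3 → ℝ) → Fin 3 → Fin 3 → ℝ) : Fin 3 → Fin 3 → Q3 → ℝ :=
  fun i j q => γ q.1 q.2 i j
def toQ1 (β : ℝ → (Fin 3 → ℝ) → Fin 3 → ℝ) : Fin 3 → Q3 → ℝ := fun i q => β q.1 q.2 i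
def toQ0 (N : ℝ → (Fin 3 → ℝ) → ℝ) : Q3 → ℝ := fun q => N q.1 q.2

section translate
variable {γ : ℝ → (Fin 3 → ℝ) → Fin 3 → Fin 3 → ℝ}

lemma Mop_toQ (hγ : ∀ i j, ContDiff ℝ (⊤ : ℕ∞) (toQ γ i j)) (t : ℝ) (x : Fin 3 → ℝ) (i : Fin 3) :
    Mop (γ t) x i = MU (toQ γ) i (t, x) := by
  show (∑ j, pd j (fun y => γ t y i j) x) - pd i (fun y => ∑ j, γ t y j j) x
    = Sop (toQ γ) i (t, x) - dX i (trU (toQ γ)) (t, x)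
  congr 1
  · exact Finset.sum_congr rfl fun j _ =>
      pd_eq_dX (f := toQ γ i j) (((hγ i j).differentiable (by simp)) _) j
  · exact pd_eq_dX (f := trU (toQ γ)) (trU_differentiableAt hγ _) i

lemma divM_toQ (hγ : ∀ i j, ContDiff ℝ (⊤ : ℕ∞) (toQ γ i j)) (t : ℝ) (x : Fin 3 → ℝ) :
    divM (γ t) x = HUop (toQ γ) (t, x) := by
  show ∑ i, pd i (fun y => Mop (γ t) y i) x = ∑ i, dX i (MU (toQ γ) i) (t, x)
  refine Finset.sum_congr rfl fun i _ => ?_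
  have h1 : (fun y => Mop (γ t) y i) = fun y => MU (toQ γ) i (t, y) :=
    funext fun y => Mop_toQ hγ t y i
  rw [h1]
  exact pd_eq_dX (f := MU (toQ γ) i) (MU_differentiableAt hγ i _) i

lemma Rop_toQ (hγ : ∀ i j, ContDiff ℝ (⊤ : ℕ∞) (toQ γ i j)) (t : ℝ) (x : Fin 3 → ℝ) (i j : Fin 3) :
    Rop (γ t) x i j = RopUop (toQ γ) i j (t, x) := by
  have hA : ∀ a b : Fin 3, pd a (fun y => ∑ k, pd k (fun y' => γ t y' b k) y) x
      = dX a (Sop (toQ γ) b) (t, x) := by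
    intro a b
    have h1 : (fun y => ∑ k, pd k (fun y' => γ t y' b k) y) = fun y => Sop (toQ γ) b (t, y) := by
      funext y
      exact Finset.sum_congr rfl fun k _ =>
        pd_eq_dX (f := toQ γ b k) (((hγ b k).differentiable (by simp)) _) k
    rw [h1]
    exact pd_eq_dX (f := Sop (toQ γ) b) (Sop_differentiableAt hγ b _) a
  have hC : ∀ l : Fin 3, pd l (fun y => pd l (fun y' => γ t y' i j) y) x
      = dX l (dX l (toQ γ i j)) (t, x) := by
    intro l
    have h1 : (fun y => pd l (fun y' => γ t y' i j) y) = fun y => dX l (toQ γ i j) (t, y) :=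
      funext fun y => pd_eq_dX (f := toQ γ i j) (((hγ i j).differentiable (by simp)) _) l
    rw [h1]
    exact pd_eq_dX (f := dX l (toQ γ i j)) (dX_differentiableAt (hγ i j) l _) l
  have hD : pd i (fun y => pd j (fun y' => ∑ k, γ t y' k k) y) x
      = dX i (dX j (trU (toQ γ))) (t, x) := by
    have h1 : (fun y => pd j (fun y' => ∑ k, γ t y' k k) y) = fun y => dX j (trU (toQ γ)) (t, y) :=
      funext fun y => pd_eq_dX (f := trU (toQ γ)) (trU_differentiableAt hγ _) j
    rw [h1]
    exact pd_eq_dX (f := dX j (trU (toQ γ))) (dX_differentiableAt (trU_smooth hγ) j _) i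
  show (pd i (fun y => ∑ k, pd k (fun y' => γ t y' j k) y) x
      + pd j (fun y => ∑ k, pd k (fun y' => γ t y' i k) y) x) / 2
    - (∑ l, pd l (fun y => pd l (fun y' => γ t y' i j) y) x) / 2
    - pd i (fun y => pd j (fun y' => ∑ k, γ t y' k k) y) x / 2
    = (1/2) * (dX i (Sop (toQ γ) j) (t,x) + dX j (Sop (toQ γ) i) (t,x))
      - (1/2) * (∑ l, dX l (dX l (toQ γ i j)) (t,x)) - (1/2) * dX i (dX j (trU (toQ γ))) (t,x)
  rw [hA i j, hA j i, Finset.sum_congr rfl fun l _ => hC l, hD]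
  ring

end translate

/-- `x` integral-zero auxiliary: a nonneg continuous function with nonpositive integral over a box
vanishes at interior points. -/
lemma zero_of_setIntegral_nonpos (g : (Fin 3 → ℝ) → ℝ) (hg : Continuous g) (h0 : ∀ x, 0 ≤ g x)
    (c d z : Fin 3 → ℝ) (hz : ∀ i, c i < z i ∧ z i < d i)
    (hint : (∫ x in Set.Icc c d, g x) ≤ 0) : g z = 0 := by
  have hInt : MeasureTheory.IntegrableOn g (Set.Icc c d) :=
    hg.continuousOn.integrableOn_compact isCompact_Icc
  have h1 : ∫ x in Set.Icc c d, g x = 0 :=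
    le_antisymm hint (MeasureTheory.setIntegral_nonneg measurableSet_Icc fun x _ => h0 x)
  have h2 : g =ᵐ[MeasureTheory.volume.restrict (Set.Icc c d)] 0 :=
    (MeasureTheory.integral_eq_zero_iff_of_nonneg (fun x => h0 x) hInt).mp h1
  by_contra hne
  have hpos : 0 < g z := lt_of_le_of_ne (h0 z) (Ne.symm hne)
  set V : Set (Fin 3 → ℝ) :=
    {x | 0 < g x} ∩ Set.pi Set.univ (fun i => Set.Ioo (c i) (d i)) with hV
  have hVopen : IsOpen V :=
    (isOpen_lt continuous_const hg).inter (isOpen_set_pi Set.finite_univ fun i _ => isOpen_Ioo)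
  have hzV : z ∈ V := ⟨hpos, by intro i _; exact ⟨(hz i).1, (hz i).2⟩⟩
  have hVsub : V ⊆ Set.Icc c d := by
    rintro x ⟨-, hx⟩
    rw [Set.mem_Icc]
    constructor <;> intro i
    · exact (hx i (Set.mem_univ i)).1.le
    · exact (hx i (Set.mem_univ i)).2.le
  have hnull : MeasureTheory.volume.restrict (Set.Icc c d) V = 0 := by
    refine MeasureTheory.measure_mono_null ?_ (MeasureTheory.ae_iff.mp h2)
    intro x hx
    exact fun h => absurd h (ne_of_gt hx.1)
  rw [MeasureTheory.Measure.restrict_apply hVopen.measurableSet,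
    Set.inter_eq_self_of_subset_left hVsub] at hnull
  exact absurd hnull (hVopen.measure_pos MeasureTheory.volume ⟨z, hzV⟩).ne'
lemma wave_energy (u : Q3 → ℝ) (p : Fin 3 → Q3 → ℝ)
    (hu : ContDiff ℝ (⊤ : ℕ∞) u) (hp : ∀ i, ContDiff ℝ (⊤ : ℕ∞) (p i))
    (hu0 : ∀ x, u (0, x) = 0) (hp0 : ∀ i x, p i (0, x) = 0)
    (hut : ∀ q : Q3, 0 < q.1 → dT u q = -∑ i, dX i (p i) q)
    (hpt : ∀ i, ∀ q : Q3, 0 < q.1 → dT (p i) q = -dX i u q) :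
    ∀ t : ℝ, 0 ≤ t → ∀ x, u (t, x) = 0 ∧ ∀ i, p i (t, x) = 0 := by
  have hdiffu : ∀ q, DifferentiableAt ℝ u q := fun q => (hu.differentiable (by simp)) q
  have hdiffp : ∀ i q, DifferentiableAt ℝ (p i) q := fun i q => ((hp i).differentiable (by simp)) q
  set en : Q3 → ℝ := fun q => u q * u q + ∑ i, p i q * p i q with hen_def
  have hen : ContDiff ℝ (⊤ : ℕ∞) en := (hu.mul hu).add (ContDiff.sum fun i _ => (hp i).mul (hp i))
  have hen_nonneg : ∀ q, 0 ≤ en q := fun q =>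
    add_nonneg (mul_self_nonneg _) (Finset.sum_nonneg fun i _ => mul_self_nonneg _)
  have hen0 : ∀ x : Fin 3 → ℝ, en (0, x) = 0 := by
    intro x; simp [hen_def, hu0 x, hp0]
  have hkey1 : ∀ (j : Fin 3) (q : Q3), 0 ≤ 2 * (u q * p j q) + en q := by
    intro j q
    have h1 : p j q * p j q ≤ ∑ i, p i q * p i q :=
      Finset.single_le_sum (f := fun i => p i q * p i q)
        (fun i _ => mul_self_nonneg _) (Finset.mem_univ j)
    have h2 : 0 ≤ (u q + p j q) * (u q + p j q) := mul_self_nonneg _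
    simp only [hen_def]
    nlinarith
  have hkey2 : ∀ (j : Fin 3) (q : Q3), 2 * (u q * p j q) - en q ≤ 0 := by
    intro j q
    have h1 : p j q * p j q ≤ ∑ i, p i q * p i q :=
      Finset.single_le_sum (f := fun i => p i q * p i q)
        (fun i _ => mul_self_nonneg _) (Finset.mem_univ j)
    have h2 : 0 ≤ (u q - p j q) * (u q - p j q) := mul_self_nonneg _
    simp only [hen_def]
    nlinarith
  have henPDE : ∀ q : Q3, 0 < q.1 →
      dT en q = -∑ j, (2 * (dX j u q * p j q) + 2 * (u q * dX j (p j) q)) := by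
    intro q hq
    have h1 : dT en q = (dT u q * u q + u q * dT u q)
        + ∑ j, (dT (p j) q * p j q + p j q * dT (p j) q) := by
      show Dv _ en q = _
      rw [hen_def]
      rw [Dv_add (f := fun q => u q * u q) (g := fun q => ∑ i, p i q * p i q)
        ((hdiffu q).mul (hdiffu q)) (by fun_prop)]
      rw [Dv_mul (hdiffu q) (hdiffu q)]
      rw [Dv_sum (f := fun i q => p i q * p i q) (fun i _ => (hdiffp i q).mul (hdiffp i q))]
      congr 1
      exact Finset.sum_congr rfl fun j _ => Dv_mul (hdiffp j q) (hdiffp j q) _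
    rw [h1, hut q hq]
    simp only [Fin.sum_univ_three, hpt 0 q hq, hpt 1 q hq, hpt 2 q hq]
    ring

  -- main argument
  intro t ht x₀
  rcases eq_or_lt_of_le ht with h0 | hpos
  · refine ⟨by rw [← h0]; exact hu0 x₀, fun i => by rw [← h0]; exact hp0 i x₀⟩
  -- scaled cone setup
  set R : ℝ := t + 1 with hRdef
  set Φ : (Fin 4 → ℝ) → Q3 := fun w => (w 0, fun i => x₀ i + (R - w 0) * w i.succ) with hPhidef
  have hproj : ∀ k : Fin 4, ContDiff ℝ (⊤ : ℕ∞) (fun w : Fin 4 → ℝ => w k) := fun k => contDiff_apply ℝ ℝ k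
  have hΦ : ContDiff ℝ (⊤ : ℕ∞) Φ := by
    apply ContDiff.prodMk
    · exact hproj 0
    · exact contDiff_pi.2 fun i =>
        contDiff_const.add ((contDiff_const.sub (hproj 0)).mul (hproj i.succ))
  set L0 : (Fin 4 → ℝ) →L[ℝ] ℝ := ContinuousLinearMap.proj 0 with hL0def
  set Φ' : (Fin 4 → ℝ) → (Fin 4 → ℝ) →L[ℝ] Q3 := fun w =>
    L0.prod (ContinuousLinearMap.pi fun i =>
      (R - w 0) • (ContinuousLinearMap.proj i.succ) + w i.succ • (-L0)) with hPhi'def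
  have hΦder : ∀ w, HasFDerivAt Φ (Φ' w) w := by
    intro w
    apply HasFDerivAt.prodMk
    · exact hasFDerivAt_apply 0 w
    · apply hasFDerivAt_pi.2
      intro i
      have h1 : HasFDerivAt (fun w : Fin 4 → ℝ => R - w 0) (-L0) w :=
        (hasFDerivAt_apply 0 w).const_sub R
      exact (h1.mul (hasFDerivAt_apply i.succ w)).const_add (x₀ i)
  have hApp0 : ∀ w : Fin 4 → ℝ, Φ' w (Pi.single 0 1) =
      (((1:ℝ), (0:Fin 3 → ℝ)) : Q3) + ∑ i : Fin 3, (-(w i.succ)) • (((0:ℝ), Pi.single i 1) : Q3) := by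
    intro w
    refine Prod.ext ?_ ?_
    · simp [hPhi'def, hL0def, Prod.fst_sum, Pi.single_apply, Fin.succ_ne_zero]
    · funext i
      simp [hPhi'def, hL0def, Prod.snd_sum, Pi.single_apply, Fin.succ_ne_zero,
        Finset.sum_apply, Fin.succ_inj]
  have hAppS : ∀ (w : Fin 4 → ℝ) (j : Fin 3), Φ' w (Pi.single j.succ 1) =
      (R - w 0) • ((((0:ℝ), Pi.single j 1)) : Q3) := by
    intro w j
    refine Prod.ext ?_ ?_
    · simp [hPhi'def, hL0def, Pi.single_apply, (Fin.succ_ne_zero j).symm]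
    · funext i
      simp [hPhi'def, hL0def, Pi.single_apply, Fin.succ_ne_zero, Fin.succ_inj]
  have hchain : ∀ (g : Q3 → ℝ), ContDiff ℝ (⊤ : ℕ∞) g → ∀ (w v : Fin 4 → ℝ),
      Dv v (fun w => g (Φ w)) w = fderiv ℝ g (Φ w) (Φ' w v) := by
    intro g hg w v
    have h : HasFDerivAt (fun w => g (Φ w)) ((fderiv ℝ g (Φ w)).comp (Φ' w)) w :=
      ((hg.differentiable (by simp) (Φ w)).hasFDerivAt.comp w (hΦder w))
    show fderiv ℝ (fun w => g (Φ w)) w v = _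
    rw [h.fderiv]; rfl
  have hchain0 : ∀ (g : Q3 → ℝ), ContDiff ℝ (⊤ : ℕ∞) g → ∀ w : Fin 4 → ℝ,
      Dv (Pi.single 0 1) (fun w => g (Φ w)) w
        = dT g (Φ w) - ∑ i : Fin 3, w i.succ * dX i g (Φ w) := by
    intro g hg w
    rw [hchain g hg w _, hApp0 w, map_add, map_sum]
    simp only [map_smul, smul_eq_mul]
    unfold dT dX Dv
    rw [sub_eq_add_neg, ← Finset.sum_neg_distrib]
    congr 1
    refine Finset.sum_congr rfl fun i _ => by ring
  have hchainS : ∀ (g : Q3 → ℝ), ContDiff ℝ (⊤ : ℕ∞) g → ∀ (w : Fin 4 → ℝ) (j : Fin 3),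
      Dv (Pi.single j.succ 1) (fun w => g (Φ w)) w = (R - w 0) * dX j g (Φ w) := by
    intro g hg w j
    rw [hchain g hg w _, hAppS w j, map_smul]
    rfl
  -- the four-dimensional vector field
  set A : (Fin 4 → ℝ) → ℝ := fun w => R - w 0 with hAdef
  have hAsmooth : ContDiff ℝ (⊤ : ℕ∞) A := contDiff_const.sub (hproj 0)
  have hAder : ∀ w, HasFDerivAt A (-L0) w := fun w => (hasFDerivAt_apply 0 w).const_sub R
  have hA0 : ∀ w, Dv (Pi.single (0 : Fin 4) 1) A w = -1 := by
    intro w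
    show fderiv ℝ A w _ = -1
    rw [(hAder w).fderiv]
    simp [hL0def]
  have hAS : ∀ (w : Fin 4 → ℝ) (j : Fin 3), Dv (Pi.single j.succ 1) A w = 0 := by
    intro w j
    show fderiv ℝ A w _ = 0
    rw [(hAder w).fderiv]
    simp [hL0def, Pi.single_apply, (Fin.succ_ne_zero j).symm]
  have hcoord : ∀ (w : Fin 4 → ℝ) (j : Fin 3),
      Dv (Pi.single j.succ 1) (fun w : Fin 4 → ℝ => w j.succ) w = 1 := by
    intro w j
    show fderiv ℝ _ w _ = 1
    rw [(hasFDerivAt_apply j.succ w).fderiv]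
    simp [Pi.single_apply]
  have huΦ : ContDiff ℝ (⊤ : ℕ∞) (fun w => u (Φ w)) := hu.comp hΦ
  have hpΦ : ∀ j, ContDiff ℝ (⊤ : ℕ∞) (fun w => p j (Φ w)) := fun j => (hp j).comp hΦ
  have henΦ : ContDiff ℝ (⊤ : ℕ∞) (fun w => en (Φ w)) := hen.comp hΦ
  set F0 : (Fin 4 → ℝ) → ℝ := fun w => A w ^ 3 * en (Φ w) with hF0def
  set FS : Fin 3 → (Fin 4 → ℝ) → ℝ :=
    fun j w => A w ^ 2 * (2 * (u (Φ w) * p j (Φ w)) + w j.succ * en (Φ w)) with hFSdef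
  have hF0smooth : ContDiff ℝ (⊤ : ℕ∞) F0 := (hAsmooth.pow 3).mul henΦ
  have hFSsmooth : ∀ j, ContDiff ℝ (⊤ : ℕ∞) (FS j) := fun j =>
    (hAsmooth.pow 2).mul ((contDiff_const.mul (huΦ.mul (hpΦ j))).add ((hproj j.succ).mul henΦ))
  have hF0diff : ∀ w, DifferentiableAt ℝ F0 w := fun w => (hF0smooth.differentiable (by simp)) w
  have hFSdiff : ∀ j w, DifferentiableAt ℝ (FS j) w := fun j w =>
    ((hFSsmooth j).differentiable (by simp)) w
  set f : (Fin 4 → ℝ) → Fin 4 → ℝ := fun w => Fin.cons (F0 w) (fun j => FS j w) with hfdef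
  set f' : (Fin 4 → ℝ) → (Fin 4 → ℝ) →L[ℝ] (Fin 4 → ℝ) := fun w =>
    ContinuousLinearMap.pi (Fin.cons (fderiv ℝ F0 w) (fun j => fderiv ℝ (FS j) w)) with hf'def
  have hfder : ∀ w, HasFDerivAt f (f' w) w := by
    intro w
    apply hasFDerivAt_pi''
    intro k
    rw [hf'def, ContinuousLinearMap.proj_pi]
    refine Fin.cases ?_ ?_ k
    · simp only [hfdef, Fin.cons_zero]
      exact (hF0diff w).hasFDerivAt
    · intro j
      simp only [hfdef, Fin.cons_succ]
      exact (hFSdiff j w).hasFDerivAt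
  have hcomp0 : ∀ w : Fin 4 → ℝ, f' w (Pi.single 0 1) 0 = Dv (Pi.single 0 1) F0 w := by
    intro w; rw [hf'def]; rfl
  have hcompS : ∀ (w : Fin 4 → ℝ) (j : Fin 3),
      f' w (Pi.single j.succ 1) j.succ = Dv (Pi.single j.succ 1) (FS j) w := by
    intro w j
    rw [hf'def]
    show (Fin.cons (fderiv ℝ F0 w) (fun j => fderiv ℝ (FS j) w)
      : Fin 4 → (Fin 4 → ℝ) →L[ℝ] ℝ) j.succ (Pi.single j.succ 1) = _
    rw [Fin.cons_succ]
    rfl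
  -- divergence vanishes for positive times
  have hdiv : ∀ w : Fin 4 → ℝ, 0 < w 0 → ∑ k : Fin 4, f' w (Pi.single k 1) k = 0 := by
    intro w hw
    have hXpos : (0:ℝ) < (Φ w).1 := hw
    have hterm0 : Dv (Pi.single 0 1) F0 w =
        (3 * A w ^ 2 * (-1)) * en (Φ w)
          + A w ^ 3 * (dT en (Φ w) - ∑ i : Fin 3, w i.succ * dX i en (Φ w)) := by
      rw [hF0def]
      rw [Dv_mul (f := fun w => A w ^ 3) (g := fun w => en (Φ w))
        ((hAsmooth.differentiable (by simp) w).pow 3) ((henΦ.differentiable (by simp)) w)]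
      rw [Dv_pow (hAsmooth.differentiable (by simp) w), hA0, hchain0 en hen w]
      norm_num
    have htermS : ∀ j : Fin 3, Dv (Pi.single j.succ 1) (FS j) w =
        A w ^ 2 * (2 * (((R - w 0) * dX j u (Φ w)) * p j (Φ w)
            + u (Φ w) * ((R - w 0) * dX j (p j) (Φ w)))
          + (en (Φ w) + w j.succ * ((R - w 0) * dX j en (Φ w)))) := by
      intro j
      rw [hFSdef]
      rw [Dv_mul (f := fun w => A w ^ 2)
        (g := fun w => 2 * (u (Φ w) * p j (Φ w)) + w j.succ * en (Φ w))
        ((hAsmooth.differentiable (by simp) w).pow 2)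
        (by fun_prop)]
      rw [Dv_pow (hAsmooth.differentiable (by simp) w), hAS]
      rw [Dv_add (f := fun w => 2 * (u (Φ w) * p j (Φ w))) (g := fun w => w j.succ * en (Φ w))
        (by fun_prop) (by fun_prop)]
      rw [Dv_const_mul (by fun_prop : DifferentiableAt ℝ (fun w => u (Φ w) * p j (Φ w)) w)]
      rw [Dv_mul (f := fun w => u (Φ w)) (g := fun w => p j (Φ w))
        ((huΦ.differentiable (by simp)) w) (((hpΦ j).differentiable (by simp)) w)]
      rw [Dv_mul (f := fun w : Fin 4 → ℝ => w j.succ) (g := fun w => en (Φ w))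
        (by fun_prop) ((henΦ.differentiable (by simp)) w)]
      rw [hchainS u hu w j, hchainS (p j) (hp j) w j, hchainS en hen w j, hcoord]
      ring
    rw [Fin.sum_univ_succ, hcomp0]
    have hsum : ∑ j : Fin 3, f' w (Pi.single (Fin.succ j) 1) (Fin.succ j)
        = ∑ j : Fin 3, Dv (Pi.single (Fin.succ j) 1) (FS j) w :=
      Finset.sum_congr rfl fun j _ => hcompS w j
    rw [hsum, hterm0]
    have hsum2 : ∑ j : Fin 3, Dv (Pi.single (Fin.succ j) 1) (FS j) w
        = ∑ j : Fin 3, A w ^ 2 * (2 * (((R - w 0) * dX j u (Φ w)) * p j (Φ w)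
            + u (Φ w) * ((R - w 0) * dX j (p j) (Φ w)))
          + (en (Φ w) + w j.succ * ((R - w 0) * dX j en (Φ w)))) :=
      Finset.sum_congr rfl fun j _ => htermS j
    rw [hsum2, henPDE (Φ w) hXpos]
    have hAw : A w = R - w 0 := rfl
    simp only [Fin.sum_univ_three, hAw]
    ring
  -- the box and the divergence theorem
  set a : Fin 4 → ℝ := Fin.cons 0 (fun _ => -1) with hadef
  set b : Fin 4 → ℝ := Fin.cons t (fun _ => 1) with hbdef
  have hle : a ≤ b := by
    intro k
    refine Fin.cases ?_ ?_ k
    · simp only [hadef, hbdef, Fin.cons_zero]; exact ht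
    · intro j; simp only [hadef, hbdef, Fin.cons_succ]; norm_num
  have hfc : Continuous f := by
    apply continuous_pi
    intro k
    refine Fin.cases ?_ ?_ k
    · have : (fun w => f w 0) = F0 := by
        funext w; rw [hfdef]; rfl
      rw [this]; exact hF0smooth.continuous
    · intro j
      have : (fun w => f w j.succ) = FS j := by
        funext w
        rw [hfdef]
        show (Fin.cons (F0 w) (fun j => FS j w) : Fin 4 → ℝ) j.succ = _
        rw [Fin.cons_succ]
      rw [this]; exact (hFSsmooth j).continuous
  have hdivcont : Continuous (fun w => ∑ k : Fin 4, f' w (Pi.single k 1) k) := by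
    apply continuous_finset_sum
    intro k _
    refine Fin.cases ?_ ?_ k
    · have : (fun w => f' w (Pi.single 0 1) 0) = Dv (Pi.single 0 1) F0 := funext fun w => hcomp0 w
      rw [this]; exact (Dv_smooth hF0smooth _).continuous
    · intro j
      have : (fun w => f' w (Pi.single j.succ 1) j.succ) = Dv (Pi.single j.succ 1) (FS j) :=
        funext fun w => hcompS w j
      rw [this]; exact (Dv_smooth (hFSsmooth j) _).continuous
  have key := MeasureTheory.integral_divergence_of_hasFDerivAt_off_countable a b hle f f'
    ∅ Set.countable_empty hfc.continuousOn (fun x _ => hfder x)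
    (hdivcont.continuousOn.integrableOn_compact isCompact_Icc)
  have hLHS : (∫ x in Set.Icc a b, ∑ i, f' x (Pi.single i 1) i) = 0 := by
    have hae : (Set.pi Set.univ fun i => Set.Ioo (a i) (b i))
        =ᵐ[(MeasureTheory.volume : MeasureTheory.Measure (Fin 4 → ℝ))] Set.Icc a b :=
      MeasureTheory.Measure.univ_pi_Ioo_ae_eq_Icc
    rw [← MeasureTheory.setIntegral_congr_set hae]
    rw [MeasureTheory.setIntegral_congr_fun
      (MeasurableSet.univ_pi fun i => measurableSet_Ioo) (g := fun _ => (0:ℝ)) ?_]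
    · simp
    · intro w hw
      have hw0 : w 0 ∈ Set.Ioo (a 0) (b 0) := hw 0 (Set.mem_univ 0)
      have : (0:ℝ) < w 0 := by
        have ha0 : a 0 = 0 := by rw [hadef]; rfl
        rw [ha0] at hw0; exact hw0.1
      exact hdiv w this
  rw [hLHS, Fin.sum_univ_succ] at key
  -- evaluate the time faces
  have hsucc_eval : ∀ (c : ℝ) (x : Fin 3 → ℝ) (i : Fin 3), Fin.insertNth (α := fun _ : Fin 4 => ℝ) 0 c x i.succ = x i := by
    intro c x i
    simp [Fin.insertNth_zero]
  have hf_time : ∀ (c : ℝ) (x : Fin 3 → ℝ),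
      f (Fin.insertNth (α := fun _ : Fin 4 => ℝ) 0 c x) 0 = (R - c)^3 * en (c, fun i => x₀ i + (R - c) * x i) := by
    intro c x
    rw [hfdef]
    show F0 (Fin.insertNth (α := fun _ : Fin 4 => ℝ) 0 c x) = _
    simp only [hF0def]
    have h1 : Fin.insertNth (α := fun _ : Fin 4 => ℝ) 0 c x 0 = c := Fin.insertNth_apply_same (α := fun _ : Fin 4 => ℝ) 0 c x
    have h2 : Φ (Fin.insertNth (α := fun _ : Fin 4 => ℝ) 0 c x) = (c, fun i => x₀ i + (R - c) * x i) := by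
      simp only [hPhidef]
      refine Prod.ext (by simp [h1]) ?_
      funext i
      simp only [h1, hsucc_eval]
    rw [h2]
    simp [hAdef, h1]
  have hback0 : (∫ x in Set.Icc (a ∘ Fin.succAbove 0) (b ∘ Fin.succAbove 0),
      f ((0:Fin 4).insertNth (a 0) x) 0) = 0 := by
    have ha0 : a 0 = 0 := by rw [hadef]; rfl
    have : ∀ x : Fin 3 → ℝ, f ((0:Fin 4).insertNth (a 0) x) 0 = 0 := by
      intro x
      rw [ha0, hf_time 0 x, hen0]
      ring
    rw [MeasureTheory.setIntegral_congr_fun measurableSet_Icc (g := fun _ => (0:ℝ))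
      (fun x _ => this x)]
    simp
  -- space faces signs
  have hfront_succ : ∀ j : Fin 3, 0 ≤ ∫ x in Set.Icc (a ∘ Fin.succAbove j.succ) (b ∘ Fin.succAbove j.succ),
      f ((j.succ : Fin 4).insertNth (b j.succ) x) j.succ := by
    intro j
    refine MeasureTheory.setIntegral_nonneg measurableSet_Icc fun x _ => ?_
    have hb : b j.succ = 1 := by rw [hbdef]; simp
    have hw : Fin.insertNth (α := fun _ : Fin 4 => ℝ) j.succ (b j.succ) x j.succ = 1 := by
      rw [Fin.insertNth_apply_same, hb]
    have hfs : f (Fin.insertNth j.succ (b j.succ) x) j.succ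
        = FS j (Fin.insertNth j.succ (b j.succ) x) := by
      rw [hfdef]
      show (Fin.cons _ _ : Fin 4 → ℝ) j.succ = _
      rw [Fin.cons_succ]
    rw [hfs]
    simp only [hFSdef]
    set w := Fin.insertNth (α := fun _ : Fin 4 => ℝ) j.succ (b j.succ) x
    have hw1 : w j.succ = 1 := hw
    rw [hw1, one_mul]
    exact mul_nonneg (sq_nonneg _) (hkey1 j (Φ w))
  have hback_succ : ∀ j : Fin 3, (∫ x in Set.Icc (a ∘ Fin.succAbove j.succ) (b ∘ Fin.succAbove j.succ),
      f ((j.succ : Fin 4).insertNth (a j.succ) x) j.succ) ≤ 0 := by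
    intro j
    refine MeasureTheory.setIntegral_nonpos measurableSet_Icc fun x _ => ?_
    have ha : a j.succ = -1 := by rw [hadef]; simp
    have hw : Fin.insertNth (α := fun _ : Fin 4 => ℝ) j.succ (a j.succ) x j.succ = -1 := by
      rw [Fin.insertNth_apply_same, ha]
    have hfs : f (Fin.insertNth j.succ (a j.succ) x) j.succ
        = FS j (Fin.insertNth j.succ (a j.succ) x) := by
      rw [hfdef]
      show (Fin.cons _ _ : Fin 4 → ℝ) j.succ = _
      rw [Fin.cons_succ]
    rw [hfs]
    simp only [hFSdef]
    set w := Fin.insertNth (α := fun _ : Fin 4 => ℝ) j.succ (a j.succ) x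
    have hw' : w j.succ = -1 := hw
    rw [hw']
    have h2 := hkey2 j (Φ w)
    have h3 : 2 * (u (Φ w) * p j (Φ w)) + (-1) * en (Φ w) ≤ 0 := by linarith
    exact mul_nonpos_of_nonneg_of_nonpos (sq_nonneg _) h3
  have hsum_nonneg : 0 ≤ ∑ j : Fin 3,
      ((∫ x in Set.Icc (a ∘ Fin.succAbove (Fin.succ j)) (b ∘ Fin.succAbove (Fin.succ j)),
        f ((Fin.succ j).insertNth (b (Fin.succ j)) x) (Fin.succ j)) -
       ∫ x in Set.Icc (a ∘ Fin.succAbove (Fin.succ j)) (b ∘ Fin.succAbove (Fin.succ j)),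
        f ((Fin.succ j).insertNth (a (Fin.succ j)) x) (Fin.succ j)) := by
    refine Finset.sum_nonneg fun j _ => ?_
    have := hfront_succ j
    have := hback_succ j
    linarith
  have hfront0 : (∫ x in Set.Icc (a ∘ Fin.succAbove 0) (b ∘ Fin.succAbove 0),
      f ((0:Fin 4).insertNth (b 0) x) 0) ≤ 0 := by
    rw [hback0] at key
    linarith [key, hsum_nonneg]
  -- extract pointwise vanishing of the energy at (t, x₀)
  have hb0 : b 0 = t := by rw [hbdef]; rfl
  have hgint : (∫ x in Set.Icc (a ∘ Fin.succAbove 0) (b ∘ Fin.succAbove 0),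
      (R - t)^3 * en (t, fun i => x₀ i + (R - t) * x i)) ≤ 0 := by
    have : ∀ x : Fin 3 → ℝ, f ((0:Fin 4).insertNth (b 0) x) 0
        = (R - t)^3 * en (t, fun i => x₀ i + (R - t) * x i) := by
      intro x; rw [hb0, hf_time t x]
    calc (∫ x in Set.Icc (a ∘ Fin.succAbove 0) (b ∘ Fin.succAbove 0),
        (R - t)^3 * en (t, fun i => x₀ i + (R - t) * x i))
        = ∫ x in Set.Icc (a ∘ Fin.succAbove 0) (b ∘ Fin.succAbove 0),
          f ((0:Fin 4).insertNth (b 0) x) 0 :=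
        MeasureTheory.setIntegral_congr_fun measurableSet_Icc (fun x _ => (this x).symm)
      _ ≤ 0 := hfront0
  have hRt : R - t = 1 := by rw [hRdef]; ring
  have hEzero : en (t, x₀) = 0 := by
    have hcont : Continuous (fun x : Fin 3 → ℝ => (R - t)^3 * en (t, fun i => x₀ i + (R - t) * x i)) := by
      apply continuous_const.mul
      apply hen.continuous.comp
      apply Continuous.prodMk continuous_const
      exact continuous_pi fun i => continuous_const.add (continuous_const.mul (continuous_apply i))
    have hnn : ∀ x : Fin 3 → ℝ, 0 ≤ (R - t)^3 * en (t, fun i => x₀ i + (R - t) * x i) := by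
      intro x
      rw [hRt]
      simpa using hen_nonneg (t, fun i => x₀ i + 1 * x i)
    have hz := zero_of_setIntegral_nonpos _ hcont hnn (a ∘ Fin.succAbove 0) (b ∘ Fin.succAbove 0) 0
      (by
        intro i
        constructor
        · show a (Fin.succAbove 0 i) < 0
          rw [Fin.succAbove_zero, hadef]; norm_num
        · show (0:ℝ) < b (Fin.succAbove 0 i)
          rw [Fin.succAbove_zero, hbdef]; norm_num)
      hgint
    have hx0 : (fun i => x₀ i + (R - t) * (0:Fin 3 → ℝ) i) = x₀ := by
      funext i; simp
    rw [hx0, hRt] at hz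
    have h13 : (1:ℝ)^3 = 1 := one_pow 3
    nlinarith [hz]
  have hp_sum_nonneg : 0 ≤ ∑ i, p i (t, x₀) * p i (t, x₀) :=
    Finset.sum_nonneg fun i _ => mul_self_nonneg _
  have hu_sq : u (t, x₀) * u (t, x₀) = 0 := by
    have h3 : u (t, x₀) * u (t, x₀) + ∑ i, p i (t, x₀) * p i (t, x₀) = 0 := hEzero
    nlinarith [mul_self_nonneg (u (t, x₀))]
  refine ⟨mul_self_eq_zero.mp hu_sq, fun i => ?_⟩
  have h4 : p i (t, x₀) * p i (t, x₀) ≤ ∑ k, p k (t, x₀) * p k (t, x₀) :=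
    Finset.single_le_sum (f := fun k => p k (t, x₀) * p k (t, x₀))
      (fun k _ => mul_self_nonneg _) (Finset.mem_univ i)
  have h3 : u (t, x₀) * u (t, x₀) + ∑ k, p k (t, x₀) * p k (t, x₀) = 0 := hEzero
  have h5 : p i (t, x₀) * p i (t, x₀) = 0 := by nlinarith [mul_self_nonneg (p i (t, x₀))]
  exact mul_self_eq_zero.mp h5


/-- For smooth lapse and shift perturbations `N`, `β` and smooth
symmetric initial data `γ₀`, `κ₀` satisfying `div(Mγ₀) = 0` and `Mκ₀ = 0`, any smooth
solution `(γ, κ)` of the linearized ADM evolution equations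
`γ̇ = −2κ + 2ε(β)`, `κ̇ = Rγ − ∇∇N` with these initial data satisfies
`div(Mγ) = 0` and `Mκ = 0` on `ℝ³` for all `t ≥ 0`. -/
theorem ADM_Cauchy_constraints_preserved
    (N : ℝ → (Fin 3 → ℝ) → ℝ)
    (β : ℝ → (Fin 3 → ℝ) → Fin 3 → ℝ)
    (γ κ : ℝ → (Fin 3 → ℝ) → Fin 3 → Fin 3 → ℝ)
    (γ₀ κ₀ : (Fin 3 → ℝ) → Fin 3 → Fin 3 → ℝ)
    (hNsmooth : ContDiff ℝ (⊤ : ℕ∞) (fun q : ℝ × (Fin 3 → ℝ) => N q.1 q.2))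
    (hβsmooth : ∀ i, ContDiff ℝ (⊤ : ℕ∞) (fun q : ℝ × (Fin 3 → ℝ) => β q.1 q.2 i))
    (hγsmooth : ∀ i j, ContDiff ℝ (⊤ : ℕ∞) (fun q : ℝ × (Fin 3 → ℝ) => γ q.1 q.2 i j))
    (hκsmooth : ∀ i j, ContDiff ℝ (⊤ : ℕ∞) (fun q : ℝ × (Fin 3 → ℝ) => κ q.1 q.2 i j))
    (hγ₀smooth : ∀ i j, ContDiff ℝ (⊤ : ℕ∞) (fun x => γ₀ x i j))
    (hκ₀smooth : ∀ i j, ContDiff ℝ (⊤ : ℕ∞) (fun x => κ₀ x i j))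
    (hγ₀sym : ∀ x i j, γ₀ x i j = γ₀ x j i)
    (hκ₀sym : ∀ x i j, κ₀ x i j = κ₀ x j i)
    (hγsym : ∀ t x i j, γ t x i j = γ t x j i)
    (hκsym : ∀ t x i j, κ t x i j = κ t x j i)
    (hham0 : ∀ x, divM γ₀ x = 0)
    (hmom0 : ∀ x i, Mop κ₀ x i = 0)
    (hinitγ : γ 0 = γ₀) (hinitκ : κ 0 = κ₀)
    (hevγ : ∀ t : ℝ, 0 ≤ t → ∀ x i j,
      deriv (fun s => γ s x i j) t =
        -2 * κ t x i j + (pd i (fun y => β t y j) x + pd j (fun y => β t y i) x))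
    (hevκ : ∀ t : ℝ, 0 ≤ t → ∀ x i j,
      deriv (fun s => κ s x i j) t =
        Rop (γ t) x i j - pd i (fun y => pd j (fun y' => N t y') y) x) :
    ∀ t : ℝ, 0 ≤ t → ∀ x,
      divM (γ t) x = 0 ∧ ∀ i, Mop (κ t) x i = 0 := by
  have hGs : ∀ i j, ContDiff ℝ (⊤ : ℕ∞) (toQ γ i j) := fun i j => hγsmooth i j
  have hKs : ∀ i j, ContDiff ℝ (⊤ : ℕ∞) (toQ κ i j) := fun i j => hκsmooth i j
  have hBs : ∀ i, ContDiff ℝ (⊤ : ℕ∞) (toQ1 β i) := fun i => hβsmooth i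
  have hNs : ContDiff ℝ (⊤ : ℕ∞) (toQ0 N) := hNsmooth
  -- evolution equations in spacetime form
  have hevG : ∀ i j (q : Q3), 0 ≤ q.1 →
      dT (toQ γ i j) q = -2 * toQ κ i j q + (dX i (toQ1 β j) q + dX j (toQ1 β i) q) := by
    intro i j q hq
    obtain ⟨t, x⟩ := q
    have h1 : deriv (fun s => γ s x i j) t = dT (toQ γ i j) (t, x) :=
      deriv_eq_dT (f := toQ γ i j) (((hGs i j).differentiable (by simp)) _)
    have h2 : pd i (fun y => β t y j) x = dX i (toQ1 β j) (t, x) :=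
      pd_eq_dX (f := toQ1 β j) (((hBs j).differentiable (by simp)) _) i
    have h3 : pd j (fun y => β t y i) x = dX j (toQ1 β i) (t, x) :=
      pd_eq_dX (f := toQ1 β i) (((hBs i).differentiable (by simp)) _) j
    rw [← h1, hevγ t hq x i j, h2, h3]
    rfl
  have hevK : ∀ i j (q : Q3), 0 ≤ q.1 →
      dT (toQ κ i j) q = RopUop (toQ γ) i j q - dX i (dX j (toQ0 N)) q := by
    intro i j q hq
    obtain ⟨t, x⟩ := q
    have h1 : deriv (fun s => κ s x i j) t = dT (toQ κ i j) (t, x) :=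
      deriv_eq_dT (f := toQ κ i j) (((hKs i j).differentiable (by simp)) _)
    have h2 : pd i (fun y => pd j (fun y' => N t y') y) x = dX i (dX j (toQ0 N)) (t, x) := by
      have a1 : (fun y => pd j (fun y' => N t y') y) = fun y => dX j (toQ0 N) (t, y) :=
        funext fun y => pd_eq_dX (f := toQ0 N) ((hNs.differentiable (by simp)) _) j
      rw [a1]
      exact pd_eq_dX (f := dX j (toQ0 N)) (dX_differentiableAt hNs j _) i
    rw [← h1, hevκ t hq x i j, h2, Rop_toQ hGs t x i j]
  -- the constraint fields satisfy the symmetric-hyperbolic system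
  have hH := evol_HU hGs hKs hBs hevG
  have hP := evol_PU hGs hKs hNs hevK
  have hmain := wave_energy (fun q => (1/2) * HUop (toQ γ) q) (fun i => MU (toQ κ) i)
    (contDiff_const.mul (HUop_smooth hGs)) (fun i => MU_smooth hKs i)
    (by
      intro x
      show (1:ℝ)/2 * HUop (toQ γ) (0, x) = 0
      have h1 : HUop (toQ γ) (0, x) = divM (γ 0) x := (divM_toQ hGs 0 x).symm
      rw [h1, hinitγ, hham0 x, mul_zero])
    (by
      intro i x
      show MU (toQ κ) i (0, x) = 0
      have h1 : MU (toQ κ) i (0, x) = Mop (κ 0) x i := (Mop_toQ hKs 0 x i).symm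
      rw [h1, hinitκ, hmom0 x i])
    (by
      intro q hq
      have h1 : dT (fun q => (1/2) * HUop (toQ γ) q) q = (1/2) * dT (HUop (toQ γ)) q :=
        Dv_const_mul (HUop_differentiableAt hGs q) _ _
      rw [h1, hH q hq]
      ring)
    (by
      intro i q hq
      have h1 : dX i (fun q => (1/2) * HUop (toQ γ) q) q = (1/2) * dX i (HUop (toQ γ)) q :=
        Dv_const_mul (HUop_differentiableAt hGs q) _ _
      rw [hP i q hq, h1]
      ring)
  intro t ht x
  obtain ⟨h1, h2⟩ := hmain t ht x
  constructor
  · rw [divM_toQ hGs t x]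
    have h1' : (1:ℝ)/2 * HUop (toQ γ) (t, x) = 0 := h1
    linarith
  · intro i
    rw [Mop_toQ hKs t x i]
    exact h2 i
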